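/- Suppose h is holomorphic on an open set W ⊆ ℂ containing a punctured disc {0 < |z| < r} and having a simple pole at the origin, with z·h(z) → b₀ as z → 0. Let F₁ be holomorphic on a nonempty open set V, let β₀ > 0, and let C : (0, β₀) → ℂ satisfy C(β)/β → 0 as β → 0⁺. Assume that for all β ∈ (0, β₀) and all z ∈ V (with −z ∈ W and z − iβ ∈ V): h(−iβ)·( F₁(z − iβ) − F₁(z) + C(β) ) = h(−z)·h(z − iβ). Then for all z ∈ V with z, −z ∈ W: h(z)·h(−z) = b₀·F₁′(z). -/

import Mathlib

/-- Suppose `h` is holomorphic on an open set `W` containing a punctured disc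
about `0`, with a simple pole at `0` normalised by `z·h(z) → b₀`; suppose `F₁`
is holomorphic on a nonempty open set `V`, `C(β) = o(β)` as `β → 0⁺`, and
`h(−iβ)(F₁(z − iβ) − F₁(z) + C(β)) = h(−z)h(z − iβ)` for all `β ∈ (0, β₀)` and
`z ∈ V` (with `−z ∈ W`, `z − iβ ∈ V`). Then `h(z)h(−z) = b₀·F₁′(z)` for all
`z ∈ V` with `z, −z ∈ W`. -/
theorem factorisation_implies_deriv (W V : Set ℂ) (hW : IsOpen W) (hV : IsOpen V)
    (hVne : V.Nonempty) (h F₁ : ℂ → ℂ) (hh : DifferentiableOn ℂ h W)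
    (hF₁ : DifferentiableOn ℂ F₁ V) (r : ℝ) (hr : 0 < r)
    (hball : Metric.ball (0 : ℂ) r \ {0} ⊆ W) (b₀ : ℂ) (hb₀ : b₀ ≠ 0)
    (hpole : Filter.Tendsto (fun z : ℂ => z * h z)
      (nhdsWithin 0 {(0 : ℂ)}ᶜ) (nhds b₀))
    (β₀ : ℝ) (hβ₀ : 0 < β₀) (C : ℝ → ℂ)
    (hC : Filter.Tendsto (fun β : ℝ => C β / (β : ℂ))
      (nhdsWithin 0 (Set.Ioi 0)) (nhds 0))
    (heq : ∀ β ∈ Set.Ioo (0 : ℝ) β₀, ∀ z ∈ V, -z ∈ W →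
      z - Complex.I * (β : ℂ) ∈ V →
      h (-Complex.I * (β : ℂ)) *
          (F₁ (z - Complex.I * (β : ℂ)) - F₁ z + C β) =
        h (-z) * h (z - Complex.I * (β : ℂ))) :
    ∀ z ∈ V, z ∈ W → -z ∈ W → h z * h (-z) = b₀ * deriv F₁ z := by

  intro z hzV hzW hnzW
  have hl : (nhdsWithin (0:ℝ) (Set.Ioi 0)).NeBot := nhdsGT_neBot 0
  set l := nhdsWithin (0:ℝ) (Set.Ioi 0) with hldef
  -- the map β ↦ -I β tends to 0 within the punctured plane
  have hcont : Continuous fun β : ℝ => -Complex.I * (β : ℂ) := by continuity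
  have hmap0 : Filter.Tendsto (fun β : ℝ => -Complex.I * (β : ℂ)) l (nhds 0) := by
    have := hcont.tendsto 0
    simpa using this.mono_left nhdsWithin_le_nhds
  have hne : ∀ᶠ β in l, (β:ℝ) ∈ Set.Ioi (0:ℝ) := self_mem_nhdsWithin
  have hmapne : ∀ᶠ β : ℝ in l, -Complex.I * (β : ℂ) ≠ 0 := by
    filter_upwards [hne] with β hβ
    have hβ' : (β:ℂ) ≠ 0 := by
      exact_mod_cast ne_of_gt (hβ : (0:ℝ) < β)
    exact mul_ne_zero (by simp [Complex.I_ne_zero]) hβ'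
  have hmap : Filter.Tendsto (fun β : ℝ => -Complex.I * (β : ℂ)) l
      (nhdsWithin 0 {(0:ℂ)}ᶜ) := by
    rw [tendsto_nhdsWithin_iff]
    exact ⟨hmap0, hmapne⟩
  -- limit of (-Iβ) h(-Iβ)
  have h1 : Filter.Tendsto (fun β : ℝ => -Complex.I * (β:ℂ) * h (-Complex.I * (β:ℂ)))
      l (nhds b₀) := hpole.comp hmap
  -- limit of slope
  have hF₁z : HasDerivAt F₁ (deriv F₁ z) z :=
    (hF₁.differentiableAt (hV.mem_nhds hzV)).hasDerivAt
  have hmapz : Filter.Tendsto (fun β : ℝ => z - Complex.I * (β:ℂ)) l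
      (nhdsWithin z {z}ᶜ) := by
    rw [tendsto_nhdsWithin_iff]
    constructor
    · have : Filter.Tendsto (fun β : ℝ => z - Complex.I * (β:ℂ)) l (nhds (z - 0)) := by
        have h' : Filter.Tendsto (fun β : ℝ => Complex.I * (β:ℂ)) l (nhds 0) := by
          have := hmap0.neg
          simpa using this
        exact tendsto_const_nhds.sub h'
      simpa using this
    · filter_upwards [hmapne] with β hβ
      simp only [Set.mem_compl_iff, Set.mem_singleton_iff]
      intro hcontr
      exact hβ (by linear_combination hcontr)
  have h2 : Filter.Tendsto (fun β : ℝ => slope F₁ z (z - Complex.I * (β:ℂ))) l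
      (nhds (deriv F₁ z)) :=
    (hasDerivAt_iff_tendsto_slope.mp hF₁z).comp hmapz
  -- limit of C β / (-Iβ)
  have h3 : Filter.Tendsto (fun β : ℝ => C β / (-Complex.I * (β:ℂ))) l (nhds 0) := by
    have : (fun β : ℝ => C β / (-Complex.I * (β:ℂ)))
        = fun β : ℝ => (C β / (β:ℂ)) * (-Complex.I)⁻¹ := by
      funext β
      rw [div_mul_eq_div_div_swap, div_div]
      ring_nf
    rw [this]
    simpa using hC.mul (tendsto_const_nhds : Filter.Tendsto _ l (nhds (-Complex.I)⁻¹))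
  -- limit of RHS
  have hhz : ContinuousAt h z := (hh.differentiableAt (hW.mem_nhds hzW)).continuousAt
  have h4 : Filter.Tendsto (fun β : ℝ => h (-z) * h (z - Complex.I * (β:ℂ))) l
      (nhds (h (-z) * h z)) := by
    have hz' : Filter.Tendsto (fun β : ℝ => z - Complex.I * (β:ℂ)) l (nhds z) :=
      hmapz.mono_right nhdsWithin_le_nhds
    exact tendsto_const_nhds.mul ((hhz.tendsto).comp hz')
  -- the combined LHS
  have h5 : Filter.Tendsto
      (fun β : ℝ => (-Complex.I * (β:ℂ) * h (-Complex.I * (β:ℂ))) *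
        (slope F₁ z (z - Complex.I * (β:ℂ)) + C β / (-Complex.I * (β:ℂ)))) l
      (nhds (b₀ * (deriv F₁ z + 0))) := h1.mul (h2.add h3)
  -- eventual equality of the two functions
  have heqev : ∀ᶠ β : ℝ in l,
      (-Complex.I * (β:ℂ) * h (-Complex.I * (β:ℂ))) *
        (slope F₁ z (z - Complex.I * (β:ℂ)) + C β / (-Complex.I * (β:ℂ)))
      = h (-z) * h (z - Complex.I * (β:ℂ)) := by
    have hsmall : ∀ᶠ β : ℝ in l, β < β₀ :=
      Filter.eventually_iff_exists_mem.mpr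
        ⟨Set.Iio β₀, nhdsWithin_le_nhds (Iio_mem_nhds hβ₀), fun x hx => hx⟩
    have hzV' : ∀ᶠ β : ℝ in l, z - Complex.I * (β:ℂ) ∈ V := by
      have hz' : Filter.Tendsto (fun β : ℝ => z - Complex.I * (β:ℂ)) l (nhds z) :=
        hmapz.mono_right nhdsWithin_le_nhds
      exact hz' (hV.mem_nhds hzV)
    filter_upwards [hne, hsmall, hzV', hmapne] with β hβ1 hβ2 hβ3 hβ4
    have key := heq β ⟨hβ1, hβ2⟩ z hzV hnzW hβ3
    have hd : z - Complex.I * (β:ℂ) - z = -Complex.I * (β:ℂ) := by ring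
    rw [slope_def_field, hd, ← add_div, mul_comm (-Complex.I * (β:ℂ)),
      mul_assoc, mul_div_cancel₀ _ hβ4]
    exact key
  -- conclude
  have := tendsto_nhds_unique (h5.congr' heqev) h4
  rw [add_zero] at this
  linear_combination -this
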